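/- Let p : E → B be a fibration over a normal space B. Then secat(p) ≤ n if and only if the (n+1)-fold fiberwise join *_B^{n+1} p : *_B^{n+1} E → B admits a (global continuous) section. -/

import Mathlib

open unitInterval

universe u

/-- The Hurewicz homotopy lifting property: `p : E → B` is a fibration if it is continuous
and every homotopy into `B` with an initial lift lifts to `E`. -/
def IsFibration {E B : Type u} [TopologicalSpace E] [TopologicalSpace B] (p : E → B) : Prop :=
  Continuous p ∧
    ∀ (Z : Type u) [TopologicalSpace Z] (H : Z × I → B) (h₀ : Z → E),
      Continuous H → Continuous h₀ → (∀ z, p (h₀ z) = H (z, 0)) →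
        ∃ G : Z × I → E, Continuous G ∧ (∀ z, G (z, 0) = h₀ z) ∧ ∀ zt, p (G zt) = H zt

/-- The relation generating the join `X ∗ Y` (third coordinate = weight of the `Y` factor):
`(x, y, 0) ~ (x, y', 0)` and `(x, y, 1) ~ (x', y, 1)`. -/
inductive JoinRel (X Y : Type*) : X × Y × I → X × Y × I → Prop
  | zero (x : X) (y y' : Y) : JoinRel X Y (x, y, 0) (x, y', 0)
  | one (x x' : X) (y : Y) : JoinRel X Y (x, y, 1) (x', y, 1)

/-- The join `X ∗ Y` as a quotient space of `X × Y × [0,1]`. -/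
def Join (X Y : Type*) [TopologicalSpace X] [TopologicalSpace Y] : Type _ :=
  Quotient (Relation.EqvGen.setoid (JoinRel X Y))

instance instTopologicalSpaceJoin (X Y : Type*) [TopologicalSpace X] [TopologicalSpace Y] :
    TopologicalSpace (Join X Y) :=
  inferInstanceAs (TopologicalSpace (Quotient _))

section FJ

variable {B E₁ E₂ : Type u} [TopologicalSpace B] [TopologicalSpace E₁] [TopologicalSpace E₂]

/-- Points `t₁e₁ + t₂e₂` of the join with `t₁, t₂ ≠ 0` must satisfy `p₁(e₁) = p₂(e₂)`. -/
def FJCompat (p₁ : E₁ → B) (p₂ : E₂ → B) : Set (E₁ × E₂ × I) :=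
  {z | z.2.2 ≠ 0 ∧ z.2.2 ≠ 1 → p₁ z.1 = p₂ z.2.1}

/-- The join relation restricted to the compatible part. -/
def FJRel (p₁ : E₁ → B) (p₂ : E₂ → B) (a b : FJCompat p₁ p₂) : Prop :=
  JoinRel E₁ E₂ a.val b.val

/-- The fiberwise join `E₁ ∗_B E₂`: the subspace of the join `E₁ ∗ E₂` of points
`t₁e₁ + t₂e₂` such that `p₁(e₁) = p₂(e₂)` whenever `t₁, t₂ ≠ 0`. -/
def FJSpace (p₁ : E₁ → B) (p₂ : E₂ → B) : Type u :=
  Quotient (Relation.EqvGen.setoid (FJRel p₁ p₂))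

instance instTopologicalSpaceFJSpace (p₁ : E₁ → B) (p₂ : E₂ → B) :
    TopologicalSpace (FJSpace p₁ p₂) :=
  inferInstanceAs (TopologicalSpace (Quotient _))

/-- The value of the fiberwise join map on representatives. -/
noncomputable def FJMapRaw (p₁ : E₁ → B) (p₂ : E₂ → B) (z : E₁ × E₂ × I) : B :=
  if z.2.2 = 0 then p₁ z.1 else p₂ z.2.1

theorem FJMapRaw_sound (p₁ : E₁ → B) (p₂ : E₂ → B) :
    ∀ u v : E₁ × E₂ × I, JoinRel E₁ E₂ u v → FJMapRaw p₁ p₂ u = FJMapRaw p₁ p₂ v := by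
  intro u v h
  cases h with
  | zero x y y' => simp [FJMapRaw]
  | one x x' y =>
      have h1 : (1 : I) ≠ 0 := fun h => one_ne_zero (congrArg Subtype.val h)
      simp [FJMapRaw, h1]

/-- The fiberwise join `p₁ ∗_B p₂ : E₁ ∗_B E₂ → B`,
sending `t₁e₁ + t₂e₂` to `p_i(e_i)` for any `i` with `t_i ≠ 0`. -/
noncomputable def FJMap (p₁ : E₁ → B) (p₂ : E₂ → B) : FJSpace p₁ p₂ → B :=
  Quotient.lift (fun a => FJMapRaw p₁ p₂ a.val) <| by
    intro a b h
    induction h with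
    | rel x y h => exact FJMapRaw_sound p₁ p₂ x.val y.val h
    | refl x => rfl
    | symm x y _ ih => exact ih.symm
    | trans x y z _ _ ih₁ ih₂ => exact ih₁.trans ih₂

end FJ


section Secat

variable {E B : Type u} [TopologicalSpace E] [TopologicalSpace B]

/-- `SecatLe p n` : the (reduced) sectional category of `p` is at most `n`, i.e. `B` admits
an open cover by `n+1` sets each admitting a continuous partial section of `p`. -/
def SecatLe (p : E → B) (n : ℕ) : Prop :=
  ∃ U : Fin (n + 1) → Set B, (∀ i, IsOpen (U i)) ∧ (⋃ i, U i) = Set.univ ∧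
    ∀ i, ∃ s : U i → E, Continuous s ∧ ∀ x : U i, p (s x) = x.val

/-- A space with a topology, mapping to `B`. -/
structure FibOver (B : Type u) [TopologicalSpace B] where
  total : Type u
  [inst : TopologicalSpace total]
  proj : total → B

attribute [instance] FibOver.inst

/-- The `(n+1)`-fold iterated fiberwise join `∗_B^{n+1} p` of `p : E → B` with itself
(`iterFJ p n` has `n+1` factors). -/
noncomputable def iterFJ (p : E → B) : ℕ → FibOver B
  | 0 => ⟨E, p⟩
  | n + 1 => ⟨FJSpace (iterFJ p n).proj p, FJMap (iterFJ p n).proj p⟩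

end Secat


/-!
Given an open cover `U₀, …, Uₙ` of `B` with local sections `sᵢ` of `p`, normality provides a bump
covering `fᵢ` subordinate to it, and `b ↦ [s₀ b, …, sₙ b]` with weights built from the `fᵢ` is a
global section of the iterated fiberwise join. A point of the join only forgets a coordinate when
its weight is exactly `0` or `1`, so continuity in the quotient topology forces the weights to be
locally constant `0` or `1` wherever the corresponding local section is undefined.
Conversely, a section `s` of `q ∗_B p` gives a section of `p` where the weight of `s` is not `0`
and a section of `q` where it is not `1`; induction on the number of factors yields `n + 1` open
sets carrying sections of `p`.
-/

noncomputable def joinCoords {X Y : Type*} (a : X × Y × I) : I × Option X × Option Y :=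
  (a.2.2, if a.2.2 = 1 then none else some a.1, if a.2.2 = 0 then none else some a.2.1)

theorem JoinRel.joinCoords_eq {X Y : Type*} {a b : X × Y × I} (h : JoinRel X Y a b) :
    joinCoords a = joinCoords b := by
  cases h <;> simp [joinCoords]

namespace FJSpace

variable {B E₁ E₂ : Type u} {p₁ : E₁ → B} {p₂ : E₂ → B}

def mk (x : E₁) (y : E₂) (t : I) (h : t ≠ 0 → t ≠ 1 → p₁ x = p₂ y) : FJSpace p₁ p₂ :=
  Quotient.mk _ ⟨(x, y, t), fun ht => h ht.1 ht.2⟩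

theorem exists_eq_mk (z : FJSpace p₁ p₂) : ∃ x y t h, z = mk x y t h :=
  Quotient.inductionOn z fun ⟨(x, y, t), h⟩ => ⟨x, y, t, fun h₀ h₁ => h ⟨h₀, h₁⟩, rfl⟩

theorem mk_of_eq_zero {x : E₁} {y y' : E₂} {t : I} {h h'} (ht : t = 0) :
    (mk x y t h : FJSpace p₁ p₂) = mk x y' 0 h' := by
  subst ht
  exact Quotient.sound (Relation.EqvGen.rel _ _ (JoinRel.zero x y y'))

theorem mk_of_eq_one {x x' : E₁} {y : E₂} {t : I} {h h'} (ht : t = 1) :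
    (mk x y t h : FJSpace p₁ p₂) = mk x' y 1 h' := by
  subst ht
  exact Quotient.sound (Relation.EqvGen.rel _ _ (JoinRel.one x x' y))

theorem joinCoords_eq_of_eqvGen {a b : FJCompat p₁ p₂} (h : Relation.EqvGen (FJRel p₁ p₂) a b) :
    joinCoords a.1 = joinCoords b.1 :=
  congrArg (Quot.lift (joinCoords ∘ Subtype.val) fun _ _ h => JoinRel.joinCoords_eq h)
    (Quot.eqvGen_sound h)

def weight : FJSpace p₁ p₂ → I :=
  Quotient.lift (fun a => a.1.2.2) fun _ _ h => congrArg Prod.fst (joinCoords_eq_of_eqvGen h)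

-- Junk when `z.weight = 1` (resp. `0`); otherwise the coordinate of every representative.
noncomputable def left (z : FJSpace p₁ p₂) : E₁ := z.out.1.1

noncomputable def right (z : FJSpace p₁ p₂) : E₂ := z.out.1.2.1

section

variable {x : E₁} {y : E₂} {t : I} {h : t ≠ 0 → t ≠ 1 → p₁ x = p₂ y}

theorem joinCoords_out_mk : joinCoords (mk x y t h).out.1 = joinCoords (x, y, t) :=
  joinCoords_eq_of_eqvGen (Quotient.exact (Quotient.out_eq (mk x y t h)))

theorem left_mk (ht : t ≠ 1) : (mk x y t h).left = x := by
  have := congrArg (·.2.1) (joinCoords_out_mk (h := h))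
  simp_all [joinCoords, left]

theorem right_mk (ht : t ≠ 0) : (mk x y t h).right = y := by
  have := congrArg (·.2.2) (joinCoords_out_mk (h := h))
  simp_all [joinCoords, right]

end

variable [TopologicalSpace E₁] [TopologicalSpace E₂]

theorem continuous_weight : Continuous (weight : FJSpace p₁ p₂ → I) :=
  continuous_quot_lift _ (continuous_snd.comp (continuous_snd.comp continuous_subtype_val))

theorem continuousOn_left : ContinuousOn (left : FJSpace p₁ p₂ → E₁) {z | z.weight ≠ 1} := by
  refine (isQuotientMap_quotient_mk'.continuousOn_isOpen_iff
    (isOpen_compl_singleton.preimage continuous_weight)).2 ?_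
  refine (continuous_fst.comp continuous_subtype_val).continuousOn.congr ?_
  rintro ⟨⟨x, y, t⟩, h⟩ (ht : t ≠ 1)
  exact left_mk (h := fun h₀ h₁ => h ⟨h₀, h₁⟩) ht

theorem continuousOn_right : ContinuousOn (right : FJSpace p₁ p₂ → E₂) {z | z.weight ≠ 0} := by
  refine (isQuotientMap_quotient_mk'.continuousOn_isOpen_iff
    (isOpen_compl_singleton.preimage continuous_weight)).2 ?_
  refine (continuous_fst.comp (continuous_snd.comp continuous_subtype_val)).continuousOn.congr ?_
  rintro ⟨⟨x, y, t⟩, h⟩ (ht : t ≠ 0)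
  exact right_mk (h := fun h₀ h₁ => h ⟨h₀, h₁⟩) ht

section

variable {Z : Type*} [TopologicalSpace Z] {S : Set Z} {x : Z → E₁} {y : Z → E₂} {t : Z → I}
  {h : ∀ z, t z ≠ 0 → t z ≠ 1 → p₁ (x z) = p₂ (y z)}

theorem continuousOn_mk (hx : ContinuousOn x S) (hy : ContinuousOn y S) (ht : ContinuousOn t S) :
    ContinuousOn (fun z => mk (x z) (y z) (t z) (h z)) S :=
  continuous_quot_mk.comp_continuousOn
    (Topology.IsInducing.subtypeVal.continuousOn_iff.2 (hx.prodMk (hy.prodMk ht)))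

theorem continuousOn_mk_of_eqOn_zero (hx : ContinuousOn x S) (ht : ∀ z ∈ S, t z = 0) :
    ContinuousOn (fun z => mk (x z) (y z) (t z) (h z)) S := by
  intro z₀ hz₀
  refine ((continuousOn_mk (y := fun _ => y z₀) (t := fun _ => 0)
    (h := fun _ h₀ _ => absurd rfl h₀) hx continuousOn_const continuousOn_const).congr
      fun z hz => mk_of_eq_zero (ht z hz)) z₀ hz₀

theorem continuousOn_mk_of_eqOn_one (hy : ContinuousOn y S) (ht : ∀ z ∈ S, t z = 1) :
    ContinuousOn (fun z => mk (x z) (y z) (t z) (h z)) S := by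
  intro z₀ hz₀
  refine ((continuousOn_mk (x := fun _ => x z₀) (t := fun _ => 1)
    (h := fun _ _ h₁ => absurd rfl h₁) continuousOn_const hy continuousOn_const).congr
      fun z hz => mk_of_eq_one (ht z hz)) z₀ hz₀

end

variable [TopologicalSpace B]

theorem FJMap_mk {x : E₁} {y : E₂} {t : I} {h : t ≠ 0 → t ≠ 1 → p₁ x = p₂ y} :
    FJMap p₁ p₂ (mk x y t h) = if t = 0 then p₁ x else p₂ y :=
  rfl

theorem FJMap_eq_left {z : FJSpace p₁ p₂} (hz : z.weight ≠ 1) :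
    FJMap p₁ p₂ z = p₁ z.left := by
  obtain ⟨x, y, t, h, rfl⟩ := z.exists_eq_mk
  have ht : t ≠ 1 := hz
  rw [FJMap_mk, left_mk ht]
  split_ifs with h0
  · rfl
  · exact (h h0 ht).symm

theorem FJMap_eq_right {z : FJSpace p₁ p₂} (hz : z.weight ≠ 0) :
    FJMap p₁ p₂ z = p₂ z.right := by
  obtain ⟨x, y, t, h, rfl⟩ := z.exists_eq_mk
  have ht : t ≠ 0 := hz
  rw [FJMap_mk, right_mk ht, if_neg ht]

end FJSpace

section IsSectionOn

variable {X B : Type*} [TopologicalSpace B] [TopologicalSpace X]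

def IsSectionOn (q : X → B) (s : B → X) (W : Set B) : Prop :=
  ContinuousOn s W ∧ ∀ b ∈ W, q (s b) = b

variable {q : X → B} {W : Set B}

theorem IsSectionOn.mono {s : B → X} {W' : Set B} (h : IsSectionOn q s W) (hW : W' ⊆ W) :
    IsSectionOn q s W' :=
  ⟨h.1.mono hW, fun b hb => h.2 b (hW hb)⟩

theorem IsSectionOn.exists_subtype {s : B → X} (h : IsSectionOn q s W) :
    ∃ s' : W → X, Continuous s' ∧ ∀ b : W, q (s' b) = b :=
  ⟨W.domRestrict s, h.1.domRestrict, fun b => h.2 b b.2⟩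

theorem exists_isSectionOn_of_subtype [Nonempty X] {s : W → X} (hs : Continuous s)
    (hq : ∀ b : W, q (s b) = b) : ∃ s', IsSectionOn q s' W := by
  classical
  refine ⟨fun b => if h : b ∈ W then s ⟨b, h⟩ else Classical.arbitrary X, ?_, fun b hb => ?_⟩
  · rw [continuousOn_iff_continuous_domRestrict]
    convert hs using 1
    funext b
    simp [b.2]
  · simp [hb, hq]

end IsSectionOn

section JoinWeight

variable {Z : Type*} {φ ψ : Z → ℝ} {z : Z}

-- `ψ / max φ ψ` rather than `ψ / (φ + ψ)`: it is `1` on the open set `{φ < ψ}`, so near a zero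
-- of `φ` the first coordinate of the join is forgotten on a whole neighbourhood.
noncomputable def joinWeight (φ ψ : Z → ℝ) (z : Z) : I :=
  Set.projIcc 0 1 zero_le_one (ψ z / max (φ z) (ψ z))

theorem joinWeight_of_eq_zero (h : ψ z = 0) : joinWeight φ ψ z = 0 := by
  simp [joinWeight, h]

theorem joinWeight_of_le (h : φ z ≤ ψ z) (hψ : 0 < ψ z) : joinWeight φ ψ z = 1 := by
  simp [joinWeight, max_eq_right h, div_self hψ.ne']

theorem continuousOn_joinWeight [TopologicalSpace Z] (hφ : Continuous φ) (hψ : Continuous ψ) :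
    ContinuousOn (joinWeight φ ψ) {z | 0 < max (φ z) (ψ z)} :=
  continuous_projIcc.comp_continuousOn
    (hψ.continuousOn.div (hφ.max hψ).continuousOn fun _ hz => hz.ne')

end JoinWeight

section

variable {X E B : Type u} [TopologicalSpace X] [TopologicalSpace E] [TopologicalSpace B]

theorem IsSectionOn.left {q : X → B} {p : E → B} {s : B → FJSpace q p} {W : Set B}
    (hs : IsSectionOn (FJMap q p) s W) :
    IsSectionOn q (fun b => (s b).left) (W ∩ {b | (s b).weight ≠ 1}) :=
  ⟨FJSpace.continuousOn_left.comp (hs.1.mono Set.inter_subset_left) fun _ hb => hb.2,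
    fun b hb => (FJSpace.FJMap_eq_left hb.2).symm.trans (hs.2 b hb.1)⟩

theorem IsSectionOn.right {q : X → B} {p : E → B} {s : B → FJSpace q p} {W : Set B}
    (hs : IsSectionOn (FJMap q p) s W) :
    IsSectionOn p (fun b => (s b).right) (W ∩ {b | (s b).weight ≠ 0}) :=
  ⟨FJSpace.continuousOn_right.comp (hs.1.mono Set.inter_subset_left) fun _ hb => hb.2,
    fun b hb => (FJSpace.FJMap_eq_right hb.2).symm.trans (hs.2 b hb.1)⟩

theorem exists_isSectionOn_FJMap {q : X → B} {p : E → B} {φ ψ : B → ℝ} (hφ : Continuous φ)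
    (hψ : Continuous ψ) (hψ₀ : ∀ b, 0 ≤ ψ b) {s₁ : B → X} (hs₁ : IsSectionOn q s₁ {b | 0 < φ b})
    {V : Set B} (hV : IsOpen V) (hψV : tsupport ψ ⊆ V) {s₂ : B → E} (hs₂ : IsSectionOn p s₂ V) :
    ∃ s, IsSectionOn (FJMap q p) s {b | 0 < max (φ b) (ψ b)} := by
  set t := joinWeight φ ψ
  have hψ_pos : ∀ b, t b ≠ 0 → 0 < ψ b := fun b hb =>
    (hψ₀ b).lt_of_ne' fun h₀ => hb (joinWeight_of_eq_zero h₀)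
  have hV_of_pos : ∀ b, 0 < ψ b → b ∈ V := fun b hb => hψV (subset_tsupport _ hb.ne')
  have hφ_pos : ∀ b, t b ≠ 1 → 0 < ψ b → 0 < φ b := fun b h₁ hψb => by
    by_contra! hφb
    exact h₁ (joinWeight_of_le (hφb.trans hψb.le) hψb)
  have compat : ∀ b, t b ≠ 0 → t b ≠ 1 → q (s₁ b) = p (s₂ b) := fun b h₀ h₁ => by
    rw [hs₁.2 b (hφ_pos b h₁ (hψ_pos b h₀)), hs₂.2 b (hV_of_pos b (hψ_pos b h₀))]
  refine ⟨fun b => FJSpace.mk (s₁ b) (s₂ b) (t b) (compat b), ?_, fun b hb => ?_⟩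
  · refine continuousOn_of_locally_continuousOn fun b hb => ?_
    rcases le_or_gt (φ b) 0 with hφb | hφb
    · -- near `b` the weight is `1`, so only `s₂` matters
      have hψb : 0 < ψ b := (lt_max_iff.1 hb).resolve_left hφb.not_gt
      refine ⟨{c | φ c < ψ c ∧ 0 < ψ c}, (isOpen_lt hφ hψ).inter (isOpen_lt continuous_const hψ),
        ⟨hφb.trans_lt hψb, hψb⟩, FJSpace.continuousOn_mk_of_eqOn_one ?_ ?_⟩
      · exact hs₂.1.mono fun c hc => hV_of_pos c hc.2.2
      · exact fun c hc => joinWeight_of_le hc.2.1.le hc.2.2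
    by_cases hbV : b ∈ V
    · refine ⟨{c | 0 < φ c} ∩ V, (isOpen_lt continuous_const hφ).inter hV, ⟨hφb, hbV⟩,
        FJSpace.continuousOn_mk (hs₁.1.mono fun c hc => hc.2.1) (hs₂.1.mono fun c hc => hc.2.2)
          ((continuousOn_joinWeight hφ hψ).mono fun c hc => hc.1)⟩
    · refine ⟨{c | 0 < φ c} ∩ (tsupport ψ)ᶜ, (isOpen_lt continuous_const hφ).inter
        (isClosed_tsupport ψ).isOpen_compl, ⟨hφb, fun h => hbV (hψV h)⟩,
        FJSpace.continuousOn_mk_of_eqOn_zero (hs₁.1.mono fun c hc => hc.2.1) fun c hc =>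
          joinWeight_of_eq_zero (image_eq_zero_of_notMem_tsupport hc.2.2)⟩
  · rw [FJSpace.FJMap_mk]
    split_ifs with h₀
    · rcases lt_max_iff.1 (show 0 < max (φ b) (ψ b) from hb) with hφb | hψb
      · exact hs₁.2 b hφb
      · exact hs₁.2 b (hφ_pos b (by rw [h₀]; exact zero_ne_one) hψb)
    · exact hs₂.2 b (hV_of_pos b (hψ_pos b h₀))

theorem exists_cover_of_isSectionOn_iterFJ (p : E → B) (n : ℕ) {W : Set B} (hW : IsOpen W)
    {s : B → (iterFJ p n).total} (hs : IsSectionOn (iterFJ p n).proj s W) :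
    ∃ V : Fin (n + 1) → Set B, (∀ i, IsOpen (V i)) ∧ W ⊆ ⋃ i, V i ∧
      ∀ i, ∃ s', IsSectionOn p s' (V i) := by
  induction n generalizing W with
  | zero => exact ⟨fun _ => W, fun _ => hW, fun b hb => Set.mem_iUnion.2 ⟨0, hb⟩, fun _ => ⟨s, hs⟩⟩
  | succ n ih =>
    have hopen : ∀ t : I, IsOpen (W ∩ {b | (s b).weight ≠ t}) := fun t =>
      (FJSpace.continuous_weight.comp_continuousOn hs.1).isOpen_inter_preimage hW
        isOpen_compl_singleton
    obtain ⟨V, hVo, hWV, hVs⟩ := ih (hopen 1) hs.left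
    refine ⟨Fin.cons (W ∩ {b | (s b).weight ≠ 0}) V, Fin.cases (hopen 0) hVo, fun b hb => ?_,
      Fin.cases ⟨_, hs.right⟩ hVs⟩
    by_cases h₀ : (s b).weight = 0
    · have hb₁ : (s b).weight ≠ 1 := by rw [h₀]; exact zero_ne_one
      obtain ⟨i, hi⟩ := Set.mem_iUnion.1 (hWV ⟨hb, hb₁⟩)
      exact Set.mem_iUnion.2 ⟨i.succ, hi⟩
    · exact Set.mem_iUnion.2 ⟨0, hb, h₀⟩

theorem exists_isSectionOn_iterFJ (p : E → B) (m : ℕ) (ψ : Fin (m + 1) → B → ℝ)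
    (hψ : ∀ i, Continuous (ψ i)) (hψ₀ : ∀ i b, 0 ≤ ψ i b) (V : Fin (m + 1) → Set B)
    (hV : ∀ i, IsOpen (V i)) (hψV : ∀ i, tsupport (ψ i) ⊆ V i) (s : Fin (m + 1) → B → E)
    (hs : ∀ i, IsSectionOn p (s i) (V i)) :
    ∃ s', IsSectionOn (iterFJ p m).proj s' {b | ∃ i, 0 < ψ i b} := by
  induction m with
  | zero =>
    exact ⟨s 0, (hs 0).mono fun b hb => hψV 0 (subset_tsupport _ (Fin.exists_fin_one.1 hb).ne')⟩
  | succ m ih =>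
    obtain ⟨s₁, hs₁⟩ := ih (fun i => ψ i.castSucc) (fun i => hψ _) (fun i => hψ₀ _)
      (fun i => V i.castSucc) (fun i => hV _) (fun i => hψV _) (fun i => s i.castSucc)
      (fun i => hs _)
    have hsum (b : B) :
        0 < ∑ i : Fin (m + 1), ψ i.castSucc b ↔ ∃ i : Fin (m + 1), 0 < ψ i.castSucc b := by
      simpa using Finset.sum_pos_iff_of_nonneg (s := .univ) fun i _ => hψ₀ i.castSucc b
    obtain ⟨s', hs'⟩ := exists_isSectionOn_FJMap (continuous_finsetSum _ fun i _ => hψ i.castSucc)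
      (hψ (Fin.last _)) (hψ₀ _) (hs₁.mono fun b hb => (hsum b).1 hb) (hV _) (hψV _) (hs _)
    exact ⟨s', hs'.mono fun b hb => lt_max_iff.2 ((Fin.exists_fin_succ'.1 hb).imp_left (hsum b).2)⟩

end

theorem secatLe_iff_iterFJ_section_general {E B : Type u} [TopologicalSpace E] [TopologicalSpace B]
    (p : E → B) (hB : NormalSpace B) (n : ℕ) :
    SecatLe p n ↔
      ∃ s : B → (iterFJ p n).total, Continuous s ∧ ∀ b, (iterFJ p n).proj (s b) = b := by
  constructor
  · rintro ⟨U, hUo, hU, hsec⟩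
    rcases isEmpty_or_nonempty B with hB₀ | ⟨⟨b₀⟩⟩
    · exact ⟨isEmptyElim, continuous_of_discreteTopology, isEmptyElim⟩
    obtain ⟨i₀, hi₀⟩ := Set.mem_iUnion.1 (hU.ge (Set.mem_univ b₀))
    choose s₀ hs₀ hps₀ using hsec
    have : Nonempty E := ⟨s₀ i₀ ⟨b₀, hi₀⟩⟩
    choose s hs using fun i => exists_isSectionOn_of_subtype (hs₀ i) (hps₀ i)
    obtain ⟨f, hf⟩ := BumpCovering.exists_isSubordinate_of_locallyFinite isClosed_univ U hUo
      (locallyFinite_of_finite _) hU.ge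
    obtain ⟨s', hs'⟩ := exists_isSectionOn_iterFJ p n (fun i => f i) (fun i => (f i).continuous)
      f.nonneg U hUo hf s hs
    have hcov : ∀ b, ∃ i, 0 < f i b := fun b => ⟨f.ind b (Set.mem_univ b), by simp [f.ind_apply]⟩
    exact ⟨s', continuousOn_univ.1 (hs'.1.mono fun b _ => hcov b), fun b => hs'.2 b (hcov b)⟩
  · rintro ⟨s, hsc, hs⟩
    obtain ⟨V, hVo, hV, hVs⟩ := exists_cover_of_isSectionOn_iterFJ p n isOpen_univ
      ⟨hsc.continuousOn, fun b _ => hs b⟩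
    exact ⟨V, hVo, Set.univ_subset_iff.1 hV, fun i => (hVs i).elim fun _ h => h.exists_subtype⟩

/-- Schwarz: for a fibration `p : E → B` over a normal base `B`,
`secat p ≤ n` iff the `(n+1)`-fold fiberwise join `∗_B^{n+1} p` admits a global continuous
section. -/
theorem secatLe_iff_iterFJ_section {E B : Type u} [TopologicalSpace E] [TopologicalSpace B]
    (p : E → B) (hp : IsFibration p) (hB : NormalSpace B) (n : ℕ) :
    SecatLe p n ↔
      ∃ s : B → (iterFJ p n).total, Continuous s ∧ ∀ b, (iterFJ p n).proj (s b) = b :=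
  secatLe_iff_iterFJ_section_general p hB n
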